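/- arXiv:1802.03303 — 4 statements merged into one kernel-verified Lean document; each statement's English description precedes it below -/
import Mathlib

section
/- Let $2 \geq \alpha_1 \geq \alpha_2 > 0$ and let $k \geq 2$ be an integer. Then the double series $\sum_{m=1}^{\infty}\sum_{n=1}^{\infty} \frac{1}{m^{\beta}+n^{\beta}} \left(\frac{1}{m^{\alpha_1}+n^{\alpha_2}}\right)^{k-(k-1)(1/\alpha_1+1/\alpha_2)}$ converges for every $\beta > \max\{2-\alpha_1(k-(k-1)(1/\alpha_1+1/\alpha_2)),\ k\alpha_2(1/\alpha_1+1/\alpha_2-1)\}$. -/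
/-!
Split the terms according to which of `m ^ α₁`, `n ^ α₂` is larger and write `γ` for the
exponent. Where `m ^ α₁` dominates, `(m ^ α₁ + n ^ α₂) ^ (-γ)` is comparable to
`m ^ (-α₁ γ)`, `(m ^ β + n ^ β)⁻¹ ≤ m ^ (u - β) n ^ (-u)` for `0 ≤ u ≤ β`, and
`n ^ (t - u) ≤ m ^ (α₁ / α₂ (t - u))` turns this into `m ^ (-a) n ^ (-t)` for an explicit `a`;
the other region is the same estimate with the roles of `m` and `n` exchanged and `u = 0`.
For `u = min β 1` and `t = 1` both exponents exceed `1` precisely by the two lower bounds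
on `β`, so they still do for some `t > 1`, and the series is dominated by two products of
convergent `p`-series.
-/

open Real Filter Topology

lemma summable_nat_add_one_rpow_neg {a : ℝ} (ha : 1 < a) :
    Summable fun n : ℕ => ((n : ℝ) + 1) ^ (-a) := by
  have h := (summable_nat_add_iff 1).2 (Real.summable_nat_rpow.2 (by linarith : -a < -1))
  simpa only [Nat.cast_add, Nat.cast_one] using h

lemma summable_prod_nat_add_one_rpow_neg {a b : ℝ} (ha : 1 < a) (hb : 1 < b) :
    Summable fun p : ℕ × ℕ => ((p.1 : ℝ) + 1) ^ (-a) * ((p.2 : ℝ) + 1) ^ (-b) :=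
  (summable_nat_add_one_rpow_neg ha).mul_of_nonneg (summable_nat_add_one_rpow_neg hb)
    (fun _ => by positivity) (fun _ => by positivity)

lemma add_rpow_neg_le {x y : ℝ} (hx : 0 < x) (hy : 0 ≤ y) (hyx : y ≤ x) (γ : ℝ) :
    (x + y) ^ (-γ) ≤ 2 ^ |γ| * x ^ (-γ) := by
  have hc : 1 ≤ 1 + y / x := by have := div_nonneg hy hx.le; linarith
  have hc' : 1 + y / x ≤ 2 := by have := (div_le_one hx).2 hyx; linarith
  calc (x + y) ^ (-γ) = (1 + y / x) ^ (-γ) * x ^ (-γ) := by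
        rw [← mul_rpow (by positivity) hx.le]; congr 1; field_simp
    _ ≤ (1 + y / x) ^ |γ| * x ^ (-γ) := by
        gcongr
        exact neg_le_abs γ
    _ ≤ 2 ^ |γ| * x ^ (-γ) := by gcongr

lemma rpow_sub_mul_rpow_le_add_rpow {x y β u : ℝ} (hx : 0 ≤ x) (hy : 0 ≤ y) (hβ : 0 < β)
    (hu : 0 ≤ u) (huβ : u ≤ β) : x ^ (β - u) * y ^ u ≤ x ^ β + y ^ β := by
  have hm : 0 ≤ max x y := le_max_of_le_left hx
  calc x ^ (β - u) * y ^ u ≤ max x y ^ (β - u) * max x y ^ u := by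
        gcongr
        exacts [le_max_left x y, le_max_right x y]
    _ = max x y ^ β := by rw [← rpow_add' hm (by linarith), sub_add_cancel]
    _ ≤ x ^ β + y ^ β := by
        rcases max_choice x y with h | h <;> rw [h]
        exacts [le_add_of_nonneg_right (by positivity), le_add_of_nonneg_left (by positivity)]

lemma rpow_le_rpow_div_mul_of_rpow_le_rpow {M N a b s : ℝ} (hM : 0 ≤ M) (hN : 0 ≤ N)
    (hb : 0 < b) (hs : 0 ≤ s) (h : N ^ b ≤ M ^ a) : N ^ s ≤ M ^ (a / b * s) := by
  calc N ^ s = (N ^ b) ^ (s / b) := by rw [← rpow_mul hN, mul_div_cancel₀ s hb.ne']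
    _ ≤ (M ^ a) ^ (s / b) := by gcongr
    _ = M ^ (a / b * s) := by rw [← rpow_mul hM, mul_div_assoc', div_mul_eq_mul_div]

lemma inv_add_rpow_mul_add_rpow_neg_le {M N a b β γ t u : ℝ} (hM : 0 < M) (hN : 0 < N)
    (hb : 0 < b) (hβ : 0 < β) (hu : 0 ≤ u) (huβ : u ≤ β) (hut : u ≤ t) (h : N ^ b ≤ M ^ a) :
    (M ^ β + N ^ β)⁻¹ * (M ^ a + N ^ b) ^ (-γ) ≤
      2 ^ |γ| * (M ^ (-(β + a * γ - u - a / b * (t - u))) * N ^ (-t)) := by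
  have hsum : (M ^ a + N ^ b) ^ (-γ) ≤ 2 ^ |γ| * M ^ (-(a * γ)) := by
    rw [← mul_neg, rpow_mul hM.le]
    exact add_rpow_neg_le (by positivity) (by positivity) h γ
  have hinv : (M ^ β + N ^ β)⁻¹ ≤ M ^ (-(β - u)) * N ^ (-u) := by
    rw [rpow_neg hM.le, rpow_neg hN.le, ← mul_inv]
    exact inv_anti₀ (by positivity) (rpow_sub_mul_rpow_le_add_rpow hM.le hN.le hβ hu huβ)
  have hregion : N ^ (t - u) ≤ M ^ (a / b * (t - u)) :=
    rpow_le_rpow_div_mul_of_rpow_le_rpow hM.le hN.le hb (sub_nonneg.2 hut) h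
  calc (M ^ β + N ^ β)⁻¹ * (M ^ a + N ^ b) ^ (-γ)
      ≤ M ^ (-(β - u)) * N ^ (-u) * (2 ^ |γ| * M ^ (-(a * γ))) := by gcongr
    _ = 2 ^ |γ| * (M ^ (-(β - u)) * M ^ (-(a * γ)) * N ^ (t - u) * N ^ (-t)) := by
        rw [mul_assoc _ (N ^ (t - u)), ← rpow_add hN]; ring_nf
    _ ≤ 2 ^ |γ| * (M ^ (-(β - u)) * M ^ (-(a * γ)) * M ^ (a / b * (t - u)) * N ^ (-t)) := by
        gcongr
    _ = 2 ^ |γ| * (M ^ (-(β + a * γ - u - a / b * (t - u))) * N ^ (-t)) := by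
        rw [← rpow_add hM, ← rpow_add hM]; ring_nf

lemma inv_add_rpow_mul_add_rpow_neg_le_add {M N α₁ α₂ β γ t : ℝ} (hM : 0 < M) (hN : 0 < N)
    (hα₂ : 0 < α₂) (h21 : α₂ ≤ α₁) (hβ : 0 < β) (ht : 1 ≤ t) :
    (M ^ β + N ^ β)⁻¹ * (M ^ α₁ + N ^ α₂) ^ (-γ) ≤
      2 ^ |γ| * (M ^ (-(β + α₁ * γ - min β 1 - α₁ / α₂ * (t - min β 1))) * N ^ (-t) +
        M ^ (-t) * N ^ (-(β + α₂ * γ - α₂ / α₁ * t))) := by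
  rw [mul_add]
  rcases le_total (N ^ α₂) (M ^ α₁) with h | h
  · refine (inv_add_rpow_mul_add_rpow_neg_le hM hN hα₂ hβ (by positivity) (min_le_left _ _)
      (by linarith [min_le_right β 1]) h).trans (le_add_of_nonneg_right (by positivity))
  · have := inv_add_rpow_mul_add_rpow_neg_le hN hM (hα₂.trans_le h21) hβ le_rfl hβ.le
      (by linarith) h (γ := γ) (t := t)
    rw [add_comm, add_comm (_ ^ α₂), mul_comm (_ ^ (-(_ : ℝ)))] at this
    simp only [sub_zero] at this
    exact this.trans (le_add_of_nonneg_left (by positivity))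

theorem summable_inv_add_rpow_mul_inv_add_rpow_rpow {α₁ α₂ β γ : ℝ} (hα₂ : 0 < α₂)
    (h21 : α₂ ≤ α₁) (hβ : 0 < β) (h₁ : 2 < β + α₁ * γ) (h₂ : 1 + α₂ / α₁ < β + α₂ * γ) :
    Summable fun p : ℕ × ℕ =>
      1 / (((p.1 : ℝ) + 1) ^ β + ((p.2 : ℝ) + 1) ^ β) *
        (1 / (((p.1 : ℝ) + 1) ^ α₁ + ((p.2 : ℝ) + 1) ^ α₂)) ^ γ := by
  have hα₁ : 0 < α₁ := hα₂.trans_le h21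
  set A : ℝ → ℝ := fun t => β + α₁ * γ - min β 1 - α₁ / α₂ * (t - min β 1)
  set B : ℝ → ℝ := fun t => β + α₂ * γ - α₂ / α₁ * t
  have hA : 1 < A 1 := by
    rcases le_total β 1 with hβ1 | hβ1
    · calc (1 : ℝ) = α₁ / α₂ * (α₂ / α₁) := by field_simp
        _ < α₁ / α₂ * (β + α₂ * γ - 1) := by gcongr; linarith
        _ = A 1 := by simp only [A, min_eq_left hβ1]; field_simp; ring
    · simp only [A, min_eq_right hβ1]; linarith
  have hB : 1 < B 1 := by simp only [B]; linarith
  obtain ⟨t, ht, hAt, hBt⟩ : ∃ t, 1 < t ∧ 1 < A t ∧ 1 < B t := by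
    have hAc : Tendsto A (𝓝 1) (𝓝 (A 1)) := Continuous.tendsto (by fun_prop) 1
    have hBc : Tendsto B (𝓝 1) (𝓝 (B 1)) := Continuous.tendsto (by fun_prop) 1
    have : ∀ᶠ t in 𝓝[>] (1 : ℝ), 1 < t ∧ 1 < A t ∧ 1 < B t :=
      eventually_mem_nhdsWithin.and (nhdsWithin_le_nhds
        ((hAc.eventually_const_lt hA).and (hBc.eventually_const_lt hB)))
    exact this.exists
  refine (((summable_prod_nat_add_one_rpow_neg hAt ht).add
    (summable_prod_nat_add_one_rpow_neg ht hBt)).mul_left (2 ^ |γ|)).of_nonneg_of_le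
    (fun p => by positivity) (fun p => ?_)
  rw [one_div, one_div, inv_rpow (by positivity), ← rpow_neg (by positivity)]
  exact inv_add_rpow_mul_add_rpow_neg_le_add (by positivity) (by positivity) hα₂ h21 hβ ht.le

theorem stmt_0_general (α₁ α₂ : ℝ) (hα₂ : 0 < α₂) (h21 : α₂ ≤ α₁) (h12 : α₁ ≤ 2)
    (k : ℕ) (β : ℝ)
    (hβ : β > max (2 - α₁ * ((k : ℝ) - ((k : ℝ) - 1) * (1 / α₁ + 1 / α₂)))
      ((k : ℝ) * α₂ * (1 / α₁ + 1 / α₂ - 1))) :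
    Summable (fun p : ℕ × ℕ =>
      (1 / (((p.1 : ℝ) + 1) ^ β + ((p.2 : ℝ) + 1) ^ β)) *
        (1 / (((p.1 : ℝ) + 1) ^ α₁ + ((p.2 : ℝ) + 1) ^ α₂)) ^
          ((k : ℝ) - ((k : ℝ) - 1) * (1 / α₁ + 1 / α₂))) := by
  have hα₁ : 0 < α₁ := hα₂.trans_le h21
  obtain ⟨hβ₁, hβ₂⟩ := max_lt_iff.1 hβ
  have hS : 1 ≤ 1 / α₁ + 1 / α₂ := by
    have h₁ : 1 / 2 ≤ 1 / α₁ := one_div_le_one_div_of_le hα₁ h12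
    have h₂ : 1 / 2 ≤ 1 / α₂ := one_div_le_one_div_of_le hα₂ (h21.trans h12)
    linarith
  have hβ₀ : 0 < β :=
    lt_of_le_of_lt (mul_nonneg (by positivity) (sub_nonneg.2 hS)) hβ₂
  refine summable_inv_add_rpow_mul_inv_add_rpow_rpow hα₂ h21 hβ₀ (by linarith) ?_
  have hid : (k : ℝ) * α₂ * (1 / α₁ + 1 / α₂ - 1) =
      1 + α₂ / α₁ - α₂ * ((k : ℝ) - ((k : ℝ) - 1) * (1 / α₁ + 1 / α₂)) := by
    field_simp; ring
  linarith

theorem stmt_0 (α₁ α₂ : ℝ) (hα₂ : 0 < α₂) (h21 : α₂ ≤ α₁) (h12 : α₁ ≤ 2)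
    (k : ℕ) (hk : 2 ≤ k) (β : ℝ)
    (hβ : β > max (2 - α₁ * ((k : ℝ) - ((k : ℝ) - 1) * (1 / α₁ + 1 / α₂)))
      ((k : ℝ) * α₂ * (1 / α₁ + 1 / α₂ - 1))) :
    Summable (fun p : ℕ × ℕ =>
      (1 / (((p.1 : ℝ) + 1) ^ β + ((p.2 : ℝ) + 1) ^ β)) *
        (1 / (((p.1 : ℝ) + 1) ^ α₁ + ((p.2 : ℝ) + 1) ^ α₂)) ^
          ((k : ℝ) - ((k : ℝ) - 1) * (1 / α₁ + 1 / α₂))) :=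
  stmt_0_general α₁ α₂ hα₂ h21 h12 k β hβ
end

section
/- Let $2 \geq \alpha_1 \geq \alpha_2 > 0$ and let $k \geq 2$ be an integer. If the double series $\sum_{m=1}^{\infty}\sum_{n=1}^{\infty} \frac{1}{m^{\beta}+n^{\beta}} \left(\frac{1}{m^{\alpha_1}+n^{\alpha_2}}\right)^{k-(k-1)(1/\alpha_1+1/\alpha_2)}$ converges for some $\beta \in (0,2]$, then $\beta > \max\{2-\alpha_1(k-(k-1)(1/\alpha_1+1/\alpha_2)),\ k\alpha_2(1/\alpha_1+1/\alpha_2-1)\}$. -/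
/-!
Write `l = k - (k - 1) (1/α₁ + 1/α₂)`. On the region `n ≤ m` the summand is comparable to
`m ^ (-(β + α₁ l))`, and on the region `m ≤ n ^ (α₂/α₁)` it is comparable to `n ^ (-(β + α₂ l))`.
Summing over the `≈ m`, resp. `≈ n ^ (α₂/α₁)`, points of each fibre bounds the series from below by
a one-variable `p`-series, and the convergence criterion `p < -1` for each gives one of the two
lower bounds on `β`.
-/

open Real

lemma two_rpow_neg_abs_mul_rpow_le {B y : ℝ} (hB : 0 < B) (hBy : B ≤ y) (hy : y ≤ 2 * B)
    (p : ℝ) : 2 ^ (-|p|) * B ^ p ≤ y ^ p := by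
  rcases le_or_gt 0 p with hp | hp
  · calc 2 ^ (-|p|) * B ^ p ≤ 1 * B ^ p := by
          gcongr
          exact rpow_le_one_of_one_le_of_nonpos one_le_two (by simp)
      _ ≤ y ^ p := by rw [one_mul]; gcongr
  · calc 2 ^ (-|p|) * B ^ p = (2 * B) ^ p := by
          rw [abs_of_neg hp, neg_neg, mul_rpow zero_le_two hB.le]
      _ ≤ y ^ p := rpow_le_rpow_of_nonpos (hB.trans_le hBy) hy hp.le

lemma rpow_le_one_div_add_mul_one_div_add_rpow {z a b α β : ℝ} (hz : 0 < z)
    (ha : 0 ≤ a) (haz : a ≤ z ^ β) (hb : 0 ≤ b) (hbz : b ≤ z ^ α) (l : ℝ) :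
    2⁻¹ * 2 ^ (-|l|) * z ^ (-(β + α * l)) ≤ 1 / (a + z ^ β) * (1 / (b + z ^ α)) ^ l := by
  have hzβ : 0 < z ^ β := rpow_pos_of_pos hz β
  have hzα : 0 < z ^ α := rpow_pos_of_pos hz α
  have hfirst : 2⁻¹ * z ^ (-β) ≤ 1 / (a + z ^ β) := by
    rw [rpow_neg hz.le, ← mul_inv, ← one_div]
    exact one_div_le_one_div_of_le (by positivity) (by linarith)
  have hsecond : 2 ^ (-|l|) * (z ^ α) ^ (-l) ≤ (1 / (b + z ^ α)) ^ l := by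
    rw [one_div, inv_rpow (by positivity), ← rpow_neg (by positivity), ← abs_neg l]
    exact two_rpow_neg_abs_mul_rpow_le hzα (by linarith) (by linarith) (-l)
  calc 2⁻¹ * 2 ^ (-|l|) * z ^ (-(β + α * l))
      = (2⁻¹ * z ^ (-β)) * (2 ^ (-|l|) * (z ^ α) ^ (-l)) := by
        rw [← rpow_mul hz.le, neg_add, rpow_add hz, mul_neg]; ring
    _ ≤ 1 / (a + z ^ β) * (1 / (b + z ^ α)) ^ l := by gcongr

lemma summable_natCast_mul_of_le_fiber {f : ℕ × ℕ → ℝ} (hf0 : 0 ≤ f) (hf : Summable f)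
    {N : ℕ → ℕ} {g : ℕ → ℝ} (hg : 0 ≤ g) (hgf : ∀ i j, j < N i → g i ≤ f (i, j)) :
    Summable fun i => (N i : ℝ) * g i := by
  obtain ⟨hrow, hrows⟩ := (summable_prod_of_nonneg hf0).mp hf
  refine hrows.of_nonneg_of_le (fun i => mul_nonneg (Nat.cast_nonneg _) (hg i)) fun i => ?_
  calc (N i : ℝ) * g i = ∑ j ∈ Finset.range (N i), g i := by simp
    _ ≤ ∑ j ∈ Finset.range (N i), f (i, j) :=
        Finset.sum_le_sum fun j hj => hgf i j (Finset.mem_range.mp hj)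
    _ ≤ ∑' j, f (i, j) := (hrow i).sum_le_tsum _ fun j _ => hf0 (i, j)

lemma lt_neg_one_of_summable_of_le {u : ℕ → ℝ} (hu : Summable u) {c s : ℝ} (hc : 0 < c)
    (hcu : ∀ i : ℕ, c * ((i : ℝ) + 1) ^ s ≤ u i) : s < -1 := by
  have hshift : Summable fun i : ℕ => ((i : ℝ) + 1) ^ s :=
    (summable_mul_left_iff hc.ne').mp (hu.of_nonneg_of_le (fun i => by positivity) hcu)
  rw [← summable_nat_rpow, ← summable_nat_add_iff 1]
  simpa using hshift

section DoubleSeries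

variable {α₁ α₂ β l : ℝ}

/-- The summand at `(m, n) = (p.1 + 1, p.2 + 1)`: the series is indexed from `0`. -/
noncomputable def doubleSeriesTerm (α₁ α₂ β l : ℝ) (p : ℕ × ℕ) : ℝ :=
  1 / (((p.1 : ℝ) + 1) ^ β + ((p.2 : ℝ) + 1) ^ β) *
    (1 / (((p.1 : ℝ) + 1) ^ α₁ + ((p.2 : ℝ) + 1) ^ α₂)) ^ l

lemma doubleSeriesTerm_nonneg : 0 ≤ doubleSeriesTerm α₁ α₂ β l := fun p => by
  unfold doubleSeriesTerm; positivity

lemma two_lt_of_summable_doubleSeriesTerm (hα₂ : 0 ≤ α₂) (h21 : α₂ ≤ α₁) (hβ : 0 ≤ β)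
    (hsum : Summable (doubleSeriesTerm α₁ α₂ β l)) : 2 < β + α₁ * l := by
  set c : ℝ := 2⁻¹ * 2 ^ (-|l|)
  have hbound : ∀ i j : ℕ, j < i + 1 →
      c * ((i : ℝ) + 1) ^ (-(β + α₁ * l)) ≤ doubleSeriesTerm α₁ α₂ β l (i, j) := by
    intro i j hj
    have hji : (j : ℝ) + 1 ≤ (i : ℝ) + 1 := by exact_mod_cast hj
    have hi : (1 : ℝ) ≤ (i : ℝ) + 1 := by simp
    unfold doubleSeriesTerm
    rw [add_comm (((i : ℝ) + 1) ^ β), add_comm (((i : ℝ) + 1) ^ α₁)]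
    refine rpow_le_one_div_add_mul_one_div_add_rpow (by positivity) (by positivity)
      (by gcongr) (by positivity) ?_ l
    calc ((j : ℝ) + 1) ^ α₂ ≤ ((i : ℝ) + 1) ^ α₂ := by gcongr
      _ ≤ ((i : ℝ) + 1) ^ α₁ := rpow_le_rpow_of_exponent_le hi h21
  have hrows := summable_natCast_mul_of_le_fiber doubleSeriesTerm_nonneg hsum
    (fun i => by positivity) hbound
  have := lt_neg_one_of_summable_of_le hrows (c := c) (s := 1 - (β + α₁ * l)) (by positivity)
    fun i => le_of_eq <| by
      rw [sub_eq_add_neg, rpow_add (by positivity), rpow_one]; push_cast; ring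
  linarith

lemma div_add_one_lt_of_summable_doubleSeriesTerm (hα₂ : 0 < α₂) (h21 : α₂ ≤ α₁) (hβ : 0 ≤ β)
    (hsum : Summable (doubleSeriesTerm α₁ α₂ β l)) : α₂ / α₁ + 1 < β + α₂ * l := by
  have hα₁ : 0 < α₁ := hα₂.trans_le h21
  set r := α₂ / α₁
  have hr : 0 < r := div_pos hα₂ hα₁
  have hr1 : r ≤ 1 := (div_le_one hα₁).mpr h21
  set c : ℝ := 2⁻¹ * 2 ^ (-|l|)
  have hbound : ∀ i j : ℕ, j < ⌊((i : ℝ) + 1) ^ r⌋₊ →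
      c * ((i : ℝ) + 1) ^ (-(β + α₂ * l)) ≤ doubleSeriesTerm α₁ α₂ β l (j, i) := by
    intro i j hj
    have hji : (j : ℝ) + 1 ≤ ((i : ℝ) + 1) ^ r := by
      exact_mod_cast (Nat.le_floor_iff (by positivity)).mp hj
    have hi : (1 : ℝ) ≤ (i : ℝ) + 1 := by simp
    refine rpow_le_one_div_add_mul_one_div_add_rpow (by positivity) (by positivity) ?_
      (by positivity) ?_ l
    · calc ((j : ℝ) + 1) ^ β ≤ (((i : ℝ) + 1) ^ r) ^ β := by gcongr
        _ = ((i : ℝ) + 1) ^ (r * β) := by rw [← rpow_mul (by positivity)]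
        _ ≤ ((i : ℝ) + 1) ^ β := rpow_le_rpow_of_exponent_le hi (by nlinarith)
    · calc ((j : ℝ) + 1) ^ α₁ ≤ (((i : ℝ) + 1) ^ r) ^ α₁ := by gcongr
        _ = ((i : ℝ) + 1) ^ α₂ := by rw [← rpow_mul (by positivity), div_mul_cancel₀ _ hα₁.ne']
  have hrows := summable_natCast_mul_of_le_fiber
    (fun p => doubleSeriesTerm_nonneg p.swap) hsum.prod_symm (fun i => by positivity) hbound
  have := lt_neg_one_of_summable_of_le hrows (c := c / 2) (s := r - (β + α₂ * l))
    (by positivity) fun i => by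
      have hi : (0 : ℝ) < (i : ℝ) + 1 := by positivity
      have hfloor : ((i : ℝ) + 1) ^ r / 2 ≤ ⌊((i : ℝ) + 1) ^ r⌋₊ :=
        (Nat.div_two_lt_floor (one_le_rpow (by simp) hr.le)).le
      calc c / 2 * ((i : ℝ) + 1) ^ (r - (β + α₂ * l))
          = ((i : ℝ) + 1) ^ r / 2 * (c * ((i : ℝ) + 1) ^ (-(β + α₂ * l))) := by
            rw [sub_eq_add_neg, rpow_add hi]; ring
        _ ≤ _ := by gcongr
  linarith

end DoubleSeries

theorem stmt_1_general (α₁ α₂ : ℝ) (hα₂ : 0 < α₂) (h21 : α₂ ≤ α₁)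
    (k : ℕ) (β : ℝ) (hβ0 : 0 < β)
    (hsum : Summable (fun p : ℕ × ℕ =>
      (1 / (((p.1 : ℝ) + 1) ^ β + ((p.2 : ℝ) + 1) ^ β)) *
        (1 / (((p.1 : ℝ) + 1) ^ α₁ + ((p.2 : ℝ) + 1) ^ α₂)) ^
          ((k : ℝ) - ((k : ℝ) - 1) * (1 / α₁ + 1 / α₂)))) :
    β > max (2 - α₁ * ((k : ℝ) - ((k : ℝ) - 1) * (1 / α₁ + 1 / α₂)))
      ((k : ℝ) * α₂ * (1 / α₁ + 1 / α₂ - 1)) := by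
  have hα₁ : 0 < α₁ := hα₂.trans_le h21
  have hdiag := two_lt_of_summable_doubleSeriesTerm hα₂.le h21 hβ0.le hsum
  have hcusp := div_add_one_lt_of_summable_doubleSeriesTerm hα₂ h21 hβ0.le hsum
  have hexp : (k : ℝ) * α₂ * (1 / α₁ + 1 / α₂ - 1) =
      α₂ / α₁ + 1 - α₂ * ((k : ℝ) - ((k : ℝ) - 1) * (1 / α₁ + 1 / α₂)) := by
    field_simp; ring
  rw [gt_iff_lt, max_lt_iff, hexp]
  constructor <;> linarith

theorem stmt_1 (α₁ α₂ : ℝ) (hα₂ : 0 < α₂) (h21 : α₂ ≤ α₁) (h12 : α₁ ≤ 2)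
    (k : ℕ) (hk : 2 ≤ k) (β : ℝ) (hβ0 : 0 < β) (hβ2 : β ≤ 2)
    (hsum : Summable (fun p : ℕ × ℕ =>
      (1 / (((p.1 : ℝ) + 1) ^ β + ((p.2 : ℝ) + 1) ^ β)) *
        (1 / (((p.1 : ℝ) + 1) ^ α₁ + ((p.2 : ℝ) + 1) ^ α₂)) ^
          ((k : ℝ) - ((k : ℝ) - 1) * (1 / α₁ + 1 / α₂)))) :
    β > max (2 - α₁ * ((k : ℝ) - ((k : ℝ) - 1) * (1 / α₁ + 1 / α₂)))
      ((k : ℝ) * α₂ * (1 / α₁ + 1 / α₂ - 1)) :=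
  stmt_1_general α₁ α₂ hα₂ h21 k β hβ0 hsum
end

section
/- Let $0 < \alpha_2 \leq \alpha_1 \leq 2$ with $\alpha_2 < 2$, let $k \geq 2$ with $\gamma := k - (k-1)(1/\alpha_1+1/\alpha_2) > 0$ and $(k+1) - k(1/\alpha_1+1/\alpha_2) > 0$, and let $\gamma' = k-(k-1)(1/\alpha_1+1/\alpha_2)$. Then there is a constant $C$ such that for all real $q, r \geq 1$: $\int_1^\infty \int_1^\infty \left(\min\left(\frac{1}{q^{\alpha_1}+r^{\alpha_2}}, \frac{1}{t^{\alpha_1}}, \frac{1}{s^{\alpha_2}}\right)\right)^{\gamma'} \min\left(\frac{1}{t^{\alpha_1}}, \frac{1}{s^{\alpha_2}}\right) dt\, ds \leq C (q^{\alpha_1}+r^{\alpha_2})^{k(1/\alpha_1+1/\alpha_2)-(k+1)}$. -/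
open Real MeasureTheory Set


lemma aux_Ioi (p T : ℝ) (hp : 1 < p) (hT : 0 < T) :
    ∫⁻ x in Set.Ici T, ENNReal.ofReal (x ^ (-p)) = ENNReal.ofReal (T ^ (1 - p) / (p - 1)) := by
  rw [← restrict_Ioi_eq_restrict_Ici]
  rw [← ofReal_integral_eq_lintegral_ofReal]
  · rw [integral_Ioi_rpow_of_lt (by linarith) hT]
    rw [show -p + 1 = 1 - p by ring, neg_div, ← div_neg, show -(1 - p) = p - 1 by ring]
  · exact integrableOn_Ioi_rpow_of_lt (by linarith) hT
  · filter_upwards [ae_restrict_mem measurableSet_Ioi] with x hx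
    exact Real.rpow_nonneg (le_of_lt (hT.trans hx)) _

lemma aux_Icc (p T : ℝ) (hp : p < 1) (hT : 1 ≤ T) :
    ∫⁻ x in Set.Icc 1 T, ENNReal.ofReal (x ^ (-p)) ≤ ENNReal.ofReal (T ^ (1 - p) / (1 - p)) := by
  have hcont : ContinuousOn (fun x : ℝ => x ^ (-p)) (Set.Icc 1 T) := by
    intro x hx
    exact (Real.continuousAt_rpow_const x (-p) (Or.inl (by linarith [hx.1]))).continuousWithinAt
  have hint : IntegrableOn (fun x : ℝ => x ^ (-p)) (Set.Icc 1 T) := hcont.integrableOn_Icc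
  rw [← ofReal_integral_eq_lintegral_ofReal hint]
  · apply ENNReal.ofReal_le_ofReal
    have h1 : ∫ x in Set.Icc (1:ℝ) T, x ^ (-p) = ∫ x in (1:ℝ)..T, x ^ (-p) := by
      rw [intervalIntegral.integral_of_le hT, integral_Icc_eq_integral_Ioc]
    rw [h1, integral_rpow (Or.inl (by linarith))]
    rw [Real.one_rpow, show -p + 1 = 1 - p by ring]
    have : (0:ℝ) < 1 - p := by linarith
    gcongr
    linarith
  · filter_upwards [ae_restrict_mem measurableSet_Icc] with x hx
    exact Real.rpow_nonneg (by linarith [hx.1]) _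

lemma min_le_rpow_mul (x y l : ℝ) (hx : 0 < x) (hy : 0 < y) (h0 : 0 ≤ l) (h1 : l ≤ 1) :
    min x y ≤ x ^ l * y ^ (1 - l) := by
  have hm : 0 < min x y := lt_min hx hy
  calc min x y = (min x y) ^ l * (min x y) ^ (1 - l) := by
        rw [← Real.rpow_add hm, show l + (1 - l) = 1 by ring, Real.rpow_one]
    _ ≤ x ^ l * y ^ (1 - l) :=
        mul_le_mul (Real.rpow_le_rpow hm.le (min_le_left _ _) h0)
          (Real.rpow_le_rpow hm.le (min_le_right _ _) (by linarith))
          (Real.rpow_nonneg hm.le _) (Real.rpow_nonneg hx.le _)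

lemma aux_inner (a b β x : ℝ) (ha : 0 < a) (hb : 0 < b) (hbβ : 1 < b * β) (hx : 1 ≤ x) :
    ∫⁻ y in Set.Ici 1, ENNReal.ofReal (min (1 / x ^ a) (1 / y ^ b) ^ β)
      ≤ ENNReal.ofReal ((1 + 1 / (b * β - 1)) * x ^ (a / b - a * β)) := by
  have hx0 : (0:ℝ) < x := lt_of_lt_of_le one_pos hx
  have hβ : 0 < β := by nlinarith
  set U : ℝ := x ^ (a / b) with hU
  have hU1 : 1 ≤ U := Real.one_le_rpow hx (by positivity)
  have hU0 : (0:ℝ) < U := lt_of_lt_of_le one_pos hU1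
  have key : ∀ y ∈ Set.Ici (1:ℝ),
      ENNReal.ofReal (min (1 / x ^ a) (1 / y ^ b) ^ β)
        ≤ (Set.Icc 1 U).indicator (fun _ => ENNReal.ofReal (x ^ (-(a * β)))) y
          + (Set.Ici U).indicator (fun y => ENNReal.ofReal (y ^ (-(b * β)))) y := by
    intro y hy
    have hy1 : (1:ℝ) ≤ y := hy
    have hy0 : (0:ℝ) < y := lt_of_lt_of_le one_pos hy1
    have hxa : (0:ℝ) < x ^ a := Real.rpow_pos_of_pos hx0 a
    have hyb : (0:ℝ) < y ^ b := Real.rpow_pos_of_pos hy0 b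
    have hmin0 : 0 ≤ min (1 / x ^ a) (1 / y ^ b) := le_min (by positivity) (by positivity)
    rcases le_total y U with hcase | hcase
    · have h1 : min (1 / x ^ a) (1 / y ^ b) ^ β ≤ x ^ (-(a * β)) := by
        calc min (1 / x ^ a) (1 / y ^ b) ^ β ≤ (1 / x ^ a) ^ β :=
              Real.rpow_le_rpow hmin0 (min_le_left _ _) hβ.le
          _ = x ^ (-(a * β)) := by
              rw [one_div, ← Real.rpow_neg hx0.le, ← Real.rpow_mul hx0.le, neg_mul]
      rw [Set.indicator_of_mem (Set.mem_Icc.2 ⟨hy1, hcase⟩)]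
      exact le_add_right (ENNReal.ofReal_le_ofReal h1)
    · have h1 : min (1 / x ^ a) (1 / y ^ b) ^ β ≤ y ^ (-(b * β)) := by
        calc min (1 / x ^ a) (1 / y ^ b) ^ β ≤ (1 / y ^ b) ^ β :=
              Real.rpow_le_rpow hmin0 (min_le_right _ _) hβ.le
          _ = y ^ (-(b * β)) := by
              rw [one_div, ← Real.rpow_neg hy0.le, ← Real.rpow_mul hy0.le, neg_mul]
      rw [Set.indicator_of_mem (Set.mem_Ici.2 hcase)]
      exact le_add_left (ENNReal.ofReal_le_ofReal h1)
  calc ∫⁻ y in Set.Ici 1, ENNReal.ofReal (min (1 / x ^ a) (1 / y ^ b) ^ β)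
      ≤ ∫⁻ y in Set.Ici 1,
          ((Set.Icc 1 U).indicator (fun _ => ENNReal.ofReal (x ^ (-(a * β)))) y
            + (Set.Ici U).indicator (fun y => ENNReal.ofReal (y ^ (-(b * β)))) y) := by
        refine setLIntegral_mono ?_ key
        exact (measurable_const.indicator measurableSet_Icc).add
          ((by fun_prop : Measurable fun y : ℝ => ENNReal.ofReal (y ^ (-(b * β)))).indicator measurableSet_Ici)
    _ = (∫⁻ y in Set.Ici 1, (Set.Icc 1 U).indicator (fun _ => ENNReal.ofReal (x ^ (-(a * β)))) y)
        + ∫⁻ y in Set.Ici 1, (Set.Ici U).indicator (fun y => ENNReal.ofReal (y ^ (-(b * β)))) y := by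
        refine lintegral_add_left ?_ _
        exact (measurable_const.indicator measurableSet_Icc)
    _ ≤ ENNReal.ofReal (x ^ (-(a * β)) * U) + ENNReal.ofReal (U ^ (1 - b * β) / (b * β - 1)) := by
        gcongr
        · rw [lintegral_indicator measurableSet_Icc, Measure.restrict_restrict measurableSet_Icc,
            Set.inter_eq_left.2 (Set.Icc_subset_Ici_self), setLIntegral_const, Real.volume_Icc]
          rw [← ENNReal.ofReal_mul (Real.rpow_nonneg hx0.le _)]
          have h9 : (0:ℝ) ≤ x ^ (-(a*β)) := Real.rpow_nonneg hx0.le _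
          exact ENNReal.ofReal_le_ofReal (by nlinarith)
        · rw [lintegral_indicator measurableSet_Ici, Measure.restrict_restrict measurableSet_Ici,
            Set.inter_eq_left.2 (Set.Ici_subset_Ici.2 hU1)]
          exact (aux_Ioi (b * β) U hbβ hU0).le
    _ ≤ ENNReal.ofReal ((1 + 1 / (b * β - 1)) * x ^ (a / b - a * β)) := by
        have hb1 : (0:ℝ) < b * β - 1 := by linarith
        rw [← ENNReal.ofReal_add (by positivity)
          (div_nonneg (Real.rpow_nonneg hU0.le _) hb1.le)]
        apply ENNReal.ofReal_le_ofReal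
        have e1 : x ^ (-(a * β)) * U = x ^ (a / b - a * β) := by
          rw [hU, ← Real.rpow_add hx0]; ring_nf
        have e2 : U ^ (1 - b * β) = x ^ (a / b - a * β) := by
          rw [hU, ← Real.rpow_mul hx0.le]
          congr 1
          field_simp
        rw [e1, e2]
        have : (0:ℝ) ≤ x ^ (a / b - a * β) := Real.rpow_nonneg hx0.le _
        rw [one_add_mul, div_mul_eq_mul_div, one_mul]

lemma aux_outer (a b β T : ℝ) (ha : 0 < a) (hb : 0 < b) (hbβ : 1 < b * β)
    (haβ : 1 + a / b < a * β) (hT : 1 ≤ T) :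
    ∫⁻ x in Set.Ici T, ∫⁻ y in Set.Ici 1, ENNReal.ofReal (min (1 / x ^ a) (1 / y ^ b) ^ β)
      ≤ ENNReal.ofReal ((1 + 1 / (b * β - 1)) / (a * β - a / b - 1) * T ^ (a / b + 1 - a * β)) := by
  have hT0 : (0:ℝ) < T := lt_of_lt_of_le one_pos hT
  have hK : (0:ℝ) ≤ 1 + 1 / (b * β - 1) := by
    have : (0:ℝ) < b * β - 1 := by linarith
    positivity
  calc ∫⁻ x in Set.Ici T, ∫⁻ y in Set.Ici 1, ENNReal.ofReal (min (1 / x ^ a) (1 / y ^ b) ^ β)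
      ≤ ∫⁻ x in Set.Ici T, ENNReal.ofReal (1 + 1 / (b * β - 1)) * ENNReal.ofReal (x ^ (-(a * β - a / b))) := by
        refine setLIntegral_mono (by fun_prop) ?_
        intro x hx
        have hx1 : (1:ℝ) ≤ x := le_trans hT hx
        refine (aux_inner a b β x ha hb hbβ hx1).trans ?_
        rw [ENNReal.ofReal_mul hK]
        rw [show -(a * β - a / b) = a / b - a * β by ring]
    _ = ENNReal.ofReal (1 + 1 / (b * β - 1)) * ∫⁻ x in Set.Ici T, ENNReal.ofReal (x ^ (-(a * β - a / b))) :=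
        lintegral_const_mul' _ _ ENNReal.ofReal_ne_top
    _ ≤ ENNReal.ofReal ((1 + 1 / (b * β - 1)) / (a * β - a / b - 1) * T ^ (a / b + 1 - a * β)) := by
        rw [aux_Ioi (a * β - a / b) T (by linarith) hT0]
        rw [← ENNReal.ofReal_mul hK]
        apply ENNReal.ofReal_le_ofReal
        rw [show (1:ℝ) - (a * β - a / b) = a / b + 1 - a * β by ring]
        rw [div_mul_eq_mul_div, mul_div_assoc]

set_option maxHeartbeats 1000000 in
theorem stmt_6 (α₁ α₂ : ℝ) (hα₂ : 0 < α₂) (h21 : α₂ ≤ α₁) (h12 : α₁ ≤ 2)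
    (hα₂2 : α₂ < 2) (k : ℕ) (hk : 2 ≤ k)
    (hγ : 0 < (k : ℝ) - ((k : ℝ) - 1) * (1 / α₁ + 1 / α₂))
    (hγ' : 0 < ((k : ℝ) + 1) - (k : ℝ) * (1 / α₁ + 1 / α₂)) :
    ∃ C : ℝ, 0 < C ∧ ∀ q r : ℝ, 1 ≤ q → 1 ≤ r →
      (∫⁻ p in Set.Ici (1 : ℝ) ×ˢ Set.Ici (1 : ℝ),
          ENNReal.ofReal
            ((min (1 / (q ^ α₁ + r ^ α₂)) (min (1 / p.1 ^ α₁) (1 / p.2 ^ α₂))) ^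
                ((k : ℝ) - ((k : ℝ) - 1) * (1 / α₁ + 1 / α₂)) *
              min (1 / p.1 ^ α₁) (1 / p.2 ^ α₂))) ≤
        ENNReal.ofReal
          (C * (q ^ α₁ + r ^ α₂) ^ ((k : ℝ) * (1 / α₁ + 1 / α₂) - ((k : ℝ) + 1))) := by
  have ha : (0:ℝ) < α₁ := lt_of_lt_of_le hα₂ h21
  set γ : ℝ := (k : ℝ) - ((k : ℝ) - 1) * (1 / α₁ + 1 / α₂) with hγdef
  set E : ℝ := (k : ℝ) * (1 / α₁ + 1 / α₂) - ((k : ℝ) + 1) with hEdef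
  set β : ℝ := γ + 1 with hβdef
  set l : ℝ := (1 + 1 / α₁ - 1 / α₂) / 2 with hldef
  clear_value γ E β l
  have hk2 : (2:ℝ) ≤ (k:ℝ) := by exact_mod_cast hk
  have hu2 : (1:ℝ)/2 ≤ 1/α₁ := by
    rw [div_le_div_iff₀ (by norm_num) ha]; linarith
  have hv2 : (1:ℝ)/2 < 1/α₂ := by
    rw [div_lt_div_iff₀ (by norm_num) hα₂]; linarith
  have huv : 1/α₁ ≤ 1/α₂ := by
    apply div_le_div_of_nonneg_left (by norm_num) hα₂ h21
  have hσ1 : 1 < 1/α₁ + 1/α₂ := by linarith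
  have hσ32 : 1/α₁ + 1/α₂ < 3/2 := by nlinarith [hγ']
  have hl0 : 0 ≤ l := by rw [hldef]; linarith
  have hl1 : l ≤ 1 := by rw [hldef]; linarith
  have hu : (1/α₁) * α₁ = 1 := by field_simp
  have hv : (1/α₂) * α₂ = 1 := by field_simp
  have hab : α₁ * α₂ < α₁ + α₂ := by nlinarith [mul_pos ha (show (0:ℝ) < 2 - α₂ by linarith)]
  have hp₁ : l * α₁ < 1 := by
    rw [hldef]; nlinarith [mul_pos hα₂ ha]
  have hp₂ : (1 - l) * α₂ < 1 := by
    rw [hldef]; nlinarith [mul_pos hα₂ ha]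
  have hβσ : 1/α₁ + 1/α₂ < β := by rw [hβdef, hγdef]; nlinarith
  have hβpos : 0 < β := by linarith
  have eσ₁ : α₁ * (1/α₁ + 1/α₂) = 1 + α₁/α₂ := by field_simp
  have eσ₂ : α₂ * (1/α₁ + 1/α₂) = α₂/α₁ + 1 := by field_simp
  have haβ₂ : 1 + α₁/α₂ < α₁ * β := by
    rw [← eσ₁]; exact mul_lt_mul_of_pos_left hβσ ha
  have hbβ₂ : 1 + α₂/α₁ < α₂ * β := by
    rw [add_comm, ← eσ₂]; exact mul_lt_mul_of_pos_left hβσ hα₂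
  have hbβ : 1 < α₂ * β := by
    have : (0:ℝ) < α₂/α₁ := by positivity
    linarith
  have haβ : 1 < α₁ * β := by
    have : (0:ℝ) < α₁/α₂ := by positivity
    linarith
  set K1 : ℝ := 1 / ((1 - l * α₁) * (1 - (1 - l) * α₂)) with hK1def
  set K2 : ℝ := (1 + 1 / (α₂ * β - 1)) / (α₁ * β - α₁ / α₂ - 1) with hK2def
  set K3 : ℝ := (1 + 1 / (α₁ * β - 1)) / (α₂ * β - α₂ / α₁ - 1) with hK3def
  have hK1pos : 0 < K1 := by
    rw [hK1def]
    apply div_pos one_pos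
    apply mul_pos <;> linarith
  have hK2pos : 0 < K2 := by
    rw [hK2def]
    apply div_pos
    · have : (0:ℝ) < α₂ * β - 1 := by linarith
      positivity
    · linarith
  have hK3pos : 0 < K3 := by
    rw [hK3def]
    apply div_pos
    · have : (0:ℝ) < α₁ * β - 1 := by linarith
      positivity
    · linarith
  refine ⟨K1 + K2 + K3, by positivity, fun q r hq hr => ?_⟩
  have hγ0 : 0 ≤ γ := hγ.le
  have hq1 : (1:ℝ) ≤ q ^ α₁ := Real.one_le_rpow hq ha.le
  have hr1 : (1:ℝ) ≤ r ^ α₂ := Real.one_le_rpow hr hα₂.le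
  set A : ℝ := q ^ α₁ + r ^ α₂ with hAdef
  have hA1 : (1:ℝ) ≤ A := by rw [hAdef]; linarith
  have hA0 : (0:ℝ) < A := by linarith
  set T : ℝ := A ^ (1/α₁) with hTdef
  set S : ℝ := A ^ (1/α₂) with hSdef
  have hT1 : (1:ℝ) ≤ T := Real.one_le_rpow hA1 (by positivity)
  have hS1 : (1:ℝ) ≤ S := Real.one_le_rpow hA1 (by positivity)
  have hc0 : (0:ℝ) ≤ 1/A := by positivity
  set F : ℝ × ℝ → ENNReal := fun p =>
    ENNReal.ofReal
      ((min (1 / A) (min (1 / p.1 ^ α₁) (1 / p.2 ^ α₂))) ^ γ *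
        min (1 / p.1 ^ α₁) (1 / p.2 ^ α₂)) with hFdef
  have piece1 : (∫⁻ p in Set.Icc 1 T ×ˢ Set.Icc 1 S, F p) ≤ ENNReal.ofReal (K1 * A ^ E) := by
    have step1 : (∫⁻ p in Set.Icc 1 T ×ˢ Set.Icc 1 S, F p)
        ≤ ∫⁻ p in Set.Icc 1 T ×ˢ Set.Icc 1 S,
            (ENNReal.ofReal ((1/A) ^ γ * p.1 ^ (-(l * α₁))) *
              ENNReal.ofReal (p.2 ^ (-((1 - l) * α₂)))) := by
      refine setLIntegral_mono (by fun_prop) ?_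
      rintro ⟨t, s⟩ ⟨⟨ht, -⟩, ⟨hs, -⟩⟩
      have ht0 : (0:ℝ) < t := lt_of_lt_of_le one_pos ht
      have hs0 : (0:ℝ) < s := lt_of_lt_of_le one_pos hs
      have hta : (0:ℝ) < t ^ α₁ := Real.rpow_pos_of_pos ht0 _
      have hsb : (0:ℝ) < s ^ α₂ := Real.rpow_pos_of_pos hs0 _
      have hm0 : (0:ℝ) ≤ min (1 / t ^ α₁) (1 / s ^ α₂) := le_min (by positivity) (by positivity)
      have hmin0 : (0:ℝ) ≤ min (1/A) (min (1 / t ^ α₁) (1 / s ^ α₂)) := le_min hc0 hm0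
      have h₁ : min (1/A) (min (1 / t ^ α₁) (1 / s ^ α₂)) ^ γ ≤ (1/A) ^ γ :=
        Real.rpow_le_rpow hmin0 (min_le_left _ _) hγ0
      have h₂ : min (1 / t ^ α₁) (1 / s ^ α₂) ≤ t ^ (-(l * α₁)) * s ^ (-((1 - l) * α₂)) := by
        refine (min_le_rpow_mul _ _ l (by positivity) (by positivity) hl0 hl1).trans_eq ?_
        rw [one_div, one_div, ← Real.rpow_neg ht0.le, ← Real.rpow_neg hs0.le,
          ← Real.rpow_mul ht0.le, ← Real.rpow_mul hs0.le,
          show -α₁ * l = -(l * α₁) by ring, show -α₂ * (1 - l) = -((1 - l) * α₂) by ring]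
      rw [hFdef, ← ENNReal.ofReal_mul (mul_nonneg (Real.rpow_nonneg hc0 _) (Real.rpow_nonneg ht0.le _))]
      apply ENNReal.ofReal_le_ofReal
      have hmul := mul_le_mul h₁ h₂ hm0 (Real.rpow_nonneg hc0 γ)
      rw [← mul_assoc] at hmul
      exact hmul
    have step2 : (∫⁻ p in Set.Icc 1 T ×ˢ Set.Icc 1 S,
          (ENNReal.ofReal ((1/A) ^ γ * p.1 ^ (-(l * α₁))) *
            ENNReal.ofReal (p.2 ^ (-((1 - l) * α₂)))))
        = (∫⁻ x in Set.Icc 1 T, ENNReal.ofReal ((1/A) ^ γ * x ^ (-(l * α₁))))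
          * ∫⁻ y in Set.Icc 1 S, ENNReal.ofReal (y ^ (-((1 - l) * α₂))) := by
      rw [Measure.volume_eq_prod, ← Measure.prod_restrict]
      exact lintegral_prod_mul (by fun_prop : Measurable fun x : ℝ =>
          ENNReal.ofReal ((1/A) ^ γ * x ^ (-(l * α₁)))).aemeasurable
        (by fun_prop : Measurable fun y : ℝ =>
          ENNReal.ofReal (y ^ (-((1 - l) * α₂)))).aemeasurable
    have f1 : (∫⁻ x in Set.Icc 1 T, ENNReal.ofReal ((1/A) ^ γ * x ^ (-(l * α₁))))
        ≤ ENNReal.ofReal ((1/A) ^ γ) * ENNReal.ofReal (T ^ (1 - l * α₁) / (1 - l * α₁)) := by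
      simp_rw [ENNReal.ofReal_mul (Real.rpow_nonneg hc0 γ)]
      rw [lintegral_const_mul' _ _ ENNReal.ofReal_ne_top]
      exact mul_le_mul_right (aux_Icc (l * α₁) T hp₁ hT1) _
    have f2 : (∫⁻ y in Set.Icc 1 S, ENNReal.ofReal (y ^ (-((1 - l) * α₂))))
        ≤ ENNReal.ofReal (S ^ (1 - (1 - l) * α₂) / (1 - (1 - l) * α₂)) :=
      aux_Icc ((1 - l) * α₂) S hp₂ hS1
    have d1 : (1:ℝ) - l * α₁ ≠ 0 := by linarith
    have d2 : (1:ℝ) - (1 - l) * α₂ ≠ 0 := by linarith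
    have key1 : (1/A) ^ γ * (T ^ (1 - l * α₁) / (1 - l * α₁)) *
        (S ^ (1 - (1 - l) * α₂) / (1 - (1 - l) * α₂)) = K1 * A ^ E := by
      have e1 : (1/A) ^ γ = A ^ (-γ) := by
        rw [one_div, Real.inv_rpow hA0.le, ← Real.rpow_neg hA0.le]
      have e2 : T ^ (1 - l * α₁) = A ^ ((1/α₁) * (1 - l * α₁)) := by
        rw [hTdef, ← Real.rpow_mul hA0.le]
      have e3 : S ^ (1 - (1 - l) * α₂) = A ^ ((1/α₂) * (1 - (1 - l) * α₂)) := by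
        rw [hSdef, ← Real.rpow_mul hA0.le]
      rw [e1, e2, e3]
      have e4 : A ^ (-γ) * (A ^ ((1/α₁) * (1 - l * α₁)) / (1 - l * α₁)) *
          (A ^ ((1/α₂) * (1 - (1 - l) * α₂)) / (1 - (1 - l) * α₂))
          = K1 * (A ^ (-γ) * A ^ ((1/α₁) * (1 - l * α₁)) * A ^ ((1/α₂) * (1 - (1 - l) * α₂))) := by
        rw [hK1def]; field_simp
      rw [e4, ← Real.rpow_add hA0, ← Real.rpow_add hA0]
      congr 2
      rw [hγdef, hEdef]
      field_simp
      ring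
    calc (∫⁻ p in Set.Icc 1 T ×ˢ Set.Icc 1 S, F p)
        ≤ _ := step1
      _ = _ := step2
      _ ≤ ENNReal.ofReal ((1/A) ^ γ) * ENNReal.ofReal (T ^ (1 - l * α₁) / (1 - l * α₁)) *
            ENNReal.ofReal (S ^ (1 - (1 - l) * α₂) / (1 - (1 - l) * α₂)) :=
          mul_le_mul' f1 f2
      _ = ENNReal.ofReal (K1 * A ^ E) := by
          rw [← ENNReal.ofReal_mul (Real.rpow_nonneg hc0 γ), ← ENNReal.ofReal_mul
            (mul_nonneg (Real.rpow_nonneg hc0 γ) (div_nonneg (Real.rpow_nonneg (by positivity) _) (by linarith))),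
            key1]
  have ptbound : ∀ t s : ℝ, 0 < t → 0 < s →
      (min (1 / A) (min (1 / t ^ α₁) (1 / s ^ α₂))) ^ γ * min (1 / t ^ α₁) (1 / s ^ α₂)
        ≤ min (1 / t ^ α₁) (1 / s ^ α₂) ^ β := by
    intro t s ht0 hs0
    have hta : (0:ℝ) < t ^ α₁ := Real.rpow_pos_of_pos ht0 _
    have hsb : (0:ℝ) < s ^ α₂ := Real.rpow_pos_of_pos hs0 _
    have hm0 : (0:ℝ) < min (1 / t ^ α₁) (1 / s ^ α₂) := lt_min (by positivity) (by positivity)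
    have hmin0 : (0:ℝ) ≤ min (1/A) (min (1 / t ^ α₁) (1 / s ^ α₂)) := le_min hc0 hm0.le
    have h1 : min (1/A) (min (1 / t ^ α₁) (1 / s ^ α₂)) ^ γ ≤ min (1 / t ^ α₁) (1 / s ^ α₂) ^ γ :=
      Real.rpow_le_rpow hmin0 (min_le_right _ _) hγ0
    calc (min (1 / A) (min (1 / t ^ α₁) (1 / s ^ α₂))) ^ γ * min (1 / t ^ α₁) (1 / s ^ α₂)
        ≤ min (1 / t ^ α₁) (1 / s ^ α₂) ^ γ * min (1 / t ^ α₁) (1 / s ^ α₂) :=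
          mul_le_mul_of_nonneg_right h1 hm0.le
      _ = min (1 / t ^ α₁) (1 / s ^ α₂) ^ β := by
          rw [hβdef, Real.rpow_add_one hm0.ne']
  have mble2 : Measurable fun p : ℝ × ℝ =>
      ENNReal.ofReal (min (1 / p.1 ^ α₁) (1 / p.2 ^ α₂) ^ β) := by fun_prop
  have piece2 : (∫⁻ p in Set.Ici T ×ˢ Set.Ici (1:ℝ), F p) ≤ ENNReal.ofReal (K2 * A ^ E) := by
    have step1 : (∫⁻ p in Set.Ici T ×ˢ Set.Ici (1:ℝ), F p)
        ≤ ∫⁻ p in Set.Ici T ×ˢ Set.Ici (1:ℝ),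
            ENNReal.ofReal (min (1 / p.1 ^ α₁) (1 / p.2 ^ α₂) ^ β) := by
      refine setLIntegral_mono mble2 ?_
      rintro ⟨t, s⟩ ⟨ht', hs⟩
      have ht0 : (0:ℝ) < t := lt_of_lt_of_le one_pos (le_trans hT1 ht')
      have hs0 : (0:ℝ) < s := lt_of_lt_of_le one_pos hs
      exact ENNReal.ofReal_le_ofReal (ptbound t s ht0 hs0)
    have step2 : (∫⁻ p in Set.Ici T ×ˢ Set.Ici (1:ℝ),
          ENNReal.ofReal (min (1 / p.1 ^ α₁) (1 / p.2 ^ α₂) ^ β))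
        = ∫⁻ x in Set.Ici T, ∫⁻ y in Set.Ici (1:ℝ),
            ENNReal.ofReal (min (1 / x ^ α₁) (1 / y ^ α₂) ^ β) := by
      rw [Measure.volume_eq_prod, ← Measure.prod_restrict]
      exact lintegral_prod _ mble2.aemeasurable
    have key2 : T ^ (α₁/α₂ + 1 - α₁ * β) = A ^ E := by
      rw [hTdef, ← Real.rpow_mul hA0.le]
      congr 1
      rw [hEdef, hβdef, hγdef]
      field_simp
      ring
    calc (∫⁻ p in Set.Ici T ×ˢ Set.Ici (1:ℝ), F p)
        ≤ _ := step1
      _ = _ := step2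
      _ ≤ ENNReal.ofReal ((1 + 1/(α₂ * β - 1)) / (α₁ * β - α₁/α₂ - 1) * T ^ (α₁/α₂ + 1 - α₁ * β)) :=
          aux_outer α₁ α₂ β T ha hα₂ hbβ haβ₂ hT1
      _ = ENNReal.ofReal (K2 * A ^ E) := by rw [hK2def, key2]
  have piece3 : (∫⁻ p in Set.Ici (1:ℝ) ×ˢ Set.Ici S, F p) ≤ ENNReal.ofReal (K3 * A ^ E) := by
    have step1 : (∫⁻ p in Set.Ici (1:ℝ) ×ˢ Set.Ici S, F p)
        ≤ ∫⁻ p in Set.Ici (1:ℝ) ×ˢ Set.Ici S,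
            ENNReal.ofReal (min (1 / p.1 ^ α₁) (1 / p.2 ^ α₂) ^ β) := by
      refine setLIntegral_mono mble2 ?_
      rintro ⟨t, s⟩ ⟨ht, hs'⟩
      have ht0 : (0:ℝ) < t := lt_of_lt_of_le one_pos ht
      have hs0 : (0:ℝ) < s := lt_of_lt_of_le one_pos (le_trans hS1 hs')
      exact ENNReal.ofReal_le_ofReal (ptbound t s ht0 hs0)
    have step2 : (∫⁻ p in Set.Ici (1:ℝ) ×ˢ Set.Ici S,
          ENNReal.ofReal (min (1 / p.1 ^ α₁) (1 / p.2 ^ α₂) ^ β))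
        = ∫⁻ x in Set.Ici (1:ℝ), ∫⁻ y in Set.Ici S,
            ENNReal.ofReal (min (1 / x ^ α₁) (1 / y ^ α₂) ^ β) := by
      rw [Measure.volume_eq_prod, ← Measure.prod_restrict]
      exact lintegral_prod _ mble2.aemeasurable
    have step3 : (∫⁻ x in Set.Ici (1:ℝ), ∫⁻ y in Set.Ici S,
          ENNReal.ofReal (min (1 / x ^ α₁) (1 / y ^ α₂) ^ β))
        = ∫⁻ y in Set.Ici S, ∫⁻ x in Set.Ici (1:ℝ),
            ENNReal.ofReal (min (1 / y ^ α₂) (1 / x ^ α₁) ^ β) := by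
      rw [lintegral_lintegral_swap mble2.aemeasurable]
      exact lintegral_congr fun y => lintegral_congr fun x => by rw [min_comm]
    have key3 : S ^ (α₂/α₁ + 1 - α₂ * β) = A ^ E := by
      rw [hSdef, ← Real.rpow_mul hA0.le]
      congr 1
      rw [hEdef, hβdef, hγdef]
      field_simp
      ring
    calc (∫⁻ p in Set.Ici (1:ℝ) ×ˢ Set.Ici S, F p)
        ≤ _ := step1
      _ = _ := step2
      _ = _ := step3
      _ ≤ ENNReal.ofReal ((1 + 1/(α₁ * β - 1)) / (α₂ * β - α₂/α₁ - 1) * S ^ (α₂/α₁ + 1 - α₂ * β)) :=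
          aux_outer α₂ α₁ β S hα₂ ha haβ hbβ₂ hS1
      _ = ENNReal.ofReal (K3 * A ^ E) := by rw [hK3def, key3]
  have cover : (Set.Ici (1:ℝ) ×ˢ Set.Ici (1:ℝ)) ⊆
      (Set.Icc 1 T ×ˢ Set.Icc 1 S) ∪
        ((Set.Ici T ×ˢ Set.Ici (1:ℝ)) ∪ (Set.Ici (1:ℝ) ×ˢ Set.Ici S)) := by
    rintro ⟨t, s⟩ ⟨ht, hs⟩
    rcases le_total t T with h1 | h1
    · rcases le_total s S with h2 | h2
      · exact Or.inl ⟨⟨ht, h1⟩, ⟨hs, h2⟩⟩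
      · exact Or.inr (Or.inr ⟨ht, h2⟩)
    · exact Or.inr (Or.inl ⟨h1, hs⟩)
  have hAE : (0:ℝ) ≤ A ^ E := Real.rpow_nonneg hA0.le _
  calc (∫⁻ p in Set.Ici (1:ℝ) ×ˢ Set.Ici (1:ℝ), F p)
      ≤ ∫⁻ p in (Set.Icc 1 T ×ˢ Set.Icc 1 S) ∪
          ((Set.Ici T ×ˢ Set.Ici (1:ℝ)) ∪ (Set.Ici (1:ℝ) ×ˢ Set.Ici S)), F p :=
        lintegral_mono_set cover
    _ ≤ (∫⁻ p in Set.Icc 1 T ×ˢ Set.Icc 1 S, F p) +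
        ((∫⁻ p in Set.Ici T ×ˢ Set.Ici (1:ℝ), F p) + (∫⁻ p in Set.Ici (1:ℝ) ×ˢ Set.Ici S, F p)) :=
        (lintegral_union_le _ _ _).trans (add_le_add_right (lintegral_union_le _ _ _) _)
    _ ≤ ENNReal.ofReal (K1 * A ^ E) + (ENNReal.ofReal (K2 * A ^ E) + ENNReal.ofReal (K3 * A ^ E)) :=
        add_le_add piece1 (add_le_add piece2 piece3)
    _ = ENNReal.ofReal ((K1 + K2 + K3) * A ^ E) := by
        rw [← ENNReal.ofReal_add (mul_nonneg hK2pos.le hAE) (mul_nonneg hK3pos.le hAE),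
          ← ENNReal.ofReal_add (mul_nonneg hK1pos.le hAE)
            (add_nonneg (mul_nonneg hK2pos.le hAE) (mul_nonneg hK3pos.le hAE))]
        congr 1
        ring
end

section
/- Let $1 < \alpha < 2$. There is a constant $C$ depending only on $\alpha$ such that for all real $q, r \geq 3$: $\int_1^r \int_1^q \frac{dx\, dy}{[x + y\log(x+y)]^{\alpha}} \leq C \min\left(\frac{q^{2-\alpha}}{\log q},\ \frac{r^{2-\alpha}}{(\log r)^{\alpha-1}}\right)$. -/
/-! Bounding `log (x + y)` below by `log (x + 1)`, or by `log (y + 1)`, turns the integrand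
into `(c + t L)⁻ᵅ` in one variable `t`, whose integral over `t ≥ 0` is at most
`c ^ (1 - α) / ((α - 1) L)`. Integrating first in `y` leaves `∫₁^q x ^ (1 - α) / log (x + 1) dx`,
first in `x` leaves `∫₁^r y ^ (1 - α) / log (y + 1) ^ (α - 1) dy`. Both are
`O(s ^ (2 - α) / log s ^ δ)`: split at `√s`; on `[1, √s]` the integral is `O(s ^ ((2 - α) / 2))`,
which beats every power of `log s`, and on `[√s, s]` the logarithm is at least `log s / 2`. -/

open Real MeasureTheory Set

lemma lintegral_Icc_ofReal_eq_sub_of_hasDerivAt {f F : ℝ → ℝ} {a b : ℝ} (hab : a ≤ b)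
    (hF : ∀ t ∈ Icc a b, HasDerivAt F (f t) t) (hf : ContinuousOn f (Icc a b))
    (hf₀ : ∀ t ∈ Icc a b, 0 ≤ f t) :
    ∫⁻ t in Icc a b, ENNReal.ofReal (f t) = ENNReal.ofReal (F b - F a) := by
  rw [← ofReal_integral_eq_lintegral_ofReal hf.integrableOn_Icc
      ((ae_restrict_iff' measurableSet_Icc).2 (ae_of_all _ hf₀)),
    integral_Icc_eq_integral_Ioc, ← intervalIntegral.integral_of_le hab,
    intervalIntegral.integral_eq_sub_of_hasDerivAt (by rwa [uIcc_of_le hab])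
      (hf.intervalIntegrable_of_Icc hab)]

lemma lintegral_Icc_one_div_add_mul_rpow_le {α c L a b : ℝ} (hα : 1 < α) (hc : 0 < c)
    (hL : 0 < L) (ha : 0 ≤ a) :
    ∫⁻ t in Icc a b, ENNReal.ofReal (1 / (c + t * L) ^ α) ≤
      ENNReal.ofReal (c ^ (1 - α) / ((α - 1) * L)) := by
  rcases lt_or_ge b a with hba | hab
  · simp [Icc_eq_empty_of_lt hba]
  have hpos : ∀ t ∈ Icc a b, 0 < c + t * L := fun t ht => by nlinarith [ht.1]
  have hderiv : ∀ t ∈ Icc a b, HasDerivAt (fun t => -((c + t * L) ^ (1 - α) / ((α - 1) * L)))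
      (1 / (c + t * L) ^ α) t := by
    intro t ht
    have hlin : HasDerivAt (fun t => c + t * L) L t := by
      simpa using ((hasDerivAt_id t).mul_const L).const_add c
    refine ((hlin.rpow_const (Or.inl (hpos t ht).ne')).div_const _).neg.congr_deriv ?_
    rw [show 1 - α - 1 = -α by ring, rpow_neg (hpos t ht).le]
    field_simp [(by linarith : α - 1 ≠ 0)]
    ring
  have hcont : ContinuousOn (fun t => 1 / (c + t * L) ^ α) (Icc a b) :=
    continuousOn_const.div
      ((continuousOn_const.add (continuousOn_id.mul continuousOn_const)).rpow_const
        fun t ht => Or.inl (hpos t ht).ne')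
      fun t ht => (rpow_pos_of_pos (hpos t ht) α).ne'
  rw [lintegral_Icc_ofReal_eq_sub_of_hasDerivAt hab hderiv hcont
    (fun t ht => (one_div_pos.2 (rpow_pos_of_pos (hpos t ht) α)).le)]
  refine ENNReal.ofReal_le_ofReal ?_
  have hFa : (c + a * L) ^ (1 - α) ≤ c ^ (1 - α) :=
    rpow_le_rpow_of_nonpos hc (by nlinarith) (by linarith)
  have hFb : 0 < (c + b * L) ^ (1 - α) := rpow_pos_of_pos (hpos b ⟨hab, le_rfl⟩) _
  rw [neg_sub_neg, ← sub_div]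
  exact div_le_div_of_nonneg_right (by linarith) (mul_pos (by linarith) hL).le

lemma lintegral_Icc_rpow_le {α a b : ℝ} (hα : α < 2) (ha : 0 < a) :
    ∫⁻ t in Icc a b, ENNReal.ofReal (t ^ (1 - α)) ≤ ENNReal.ofReal (b ^ (2 - α) / (2 - α)) := by
  rcases lt_or_ge b a with hba | hab
  · simp [Icc_eq_empty_of_lt hba]
  have hpos : ∀ t ∈ Icc a b, 0 < t := fun t ht => ha.trans_le ht.1
  have hderiv : ∀ t ∈ Icc a b, HasDerivAt (fun t => t ^ (2 - α) / (2 - α)) (t ^ (1 - α)) t := by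
    intro t ht
    refine ((hasDerivAt_rpow_const (Or.inl (hpos t ht).ne')).div_const _).congr_deriv ?_
    rw [show 2 - α - 1 = 1 - α by ring]
    field_simp [(by linarith : 2 - α ≠ 0)]
  rw [lintegral_Icc_ofReal_eq_sub_of_hasDerivAt hab hderiv
    (continuousOn_id.rpow_const fun t ht => Or.inl (hpos t ht).ne')
    (fun t ht => (rpow_pos_of_pos (hpos t ht) _).le)]
  have : 0 ≤ a ^ (2 - α) / (2 - α) := div_nonneg (rpow_nonneg ha.le _) (by linarith)
  exact ENNReal.ofReal_le_ofReal (by linarith)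

lemma lintegral_Icc_rpow_div_log_rpow_le {α δ a b : ℝ} (hα : α < 2) (ha : 0 < a) (hδ : 0 ≤ δ) :
    ∫⁻ t in Icc a b, ENNReal.ofReal (t ^ (1 - α) / log (t + 1) ^ δ) ≤
      ENNReal.ofReal (b ^ (2 - α) / (2 - α) / log (a + 1) ^ δ) := by
  have hloga : 0 < log (a + 1) := log_pos (by linarith)
  have hk : 0 ≤ (log (a + 1) ^ δ)⁻¹ := by positivity
  calc ∫⁻ t in Icc a b, ENNReal.ofReal (t ^ (1 - α) / log (t + 1) ^ δ)
      ≤ ∫⁻ t in Icc a b, ENNReal.ofReal (log (a + 1) ^ δ)⁻¹ * ENNReal.ofReal (t ^ (1 - α)) := by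
        refine setLIntegral_mono' measurableSet_Icc fun t ht => ?_
        rw [← ENNReal.ofReal_mul hk, mul_comm, ← div_eq_mul_inv]
        gcongr
        · exact rpow_nonneg (ha.le.trans ht.1) _
        · exact ht.1
    _ = ENNReal.ofReal (log (a + 1) ^ δ)⁻¹ * ∫⁻ t in Icc a b, ENNReal.ofReal (t ^ (1 - α)) :=
        lintegral_const_mul' _ _ ENNReal.ofReal_ne_top
    _ ≤ ENNReal.ofReal (log (a + 1) ^ δ)⁻¹ * ENNReal.ofReal (b ^ (2 - α) / (2 - α)) := by
        gcongr
        exact lintegral_Icc_rpow_le hα ha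
    _ = ENNReal.ofReal (b ^ (2 - α) / (2 - α) / log (a + 1) ^ δ) := by
        rw [← ENNReal.ofReal_mul hk, mul_comm, ← div_eq_mul_inv]

lemma log_rpow_le_mul_rpow {x δ ε : ℝ} (hx : 1 ≤ x) (hδ : 0 < δ) (hε : 0 < ε) :
    log x ^ δ ≤ (δ / ε) ^ δ * x ^ ε := by
  have hx₀ : 0 ≤ x := by linarith
  have h : log x ≤ δ / ε * x ^ (ε / δ) :=
    (log_le_rpow_div hx₀ (div_pos hε hδ)).trans_eq (by field_simp)
  calc log x ^ δ ≤ (δ / ε * x ^ (ε / δ)) ^ δ := rpow_le_rpow (log_nonneg hx) h hδ.le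
    _ = (δ / ε) ^ δ * x ^ ε := by
      rw [mul_rpow (by positivity) (by positivity), ← rpow_mul hx₀, div_mul_cancel₀ _ hδ.ne']

lemma exists_lintegral_Icc_rpow_div_log_rpow_le {α δ : ℝ} (hα : α < 2) (hδ : 0 < δ) :
    ∃ C : ℝ, 0 < C ∧ ∀ s : ℝ, 1 < s →
      ∫⁻ t in Icc 1 s, ENNReal.ofReal (t ^ (1 - α) / log (t + 1) ^ δ) ≤
        ENNReal.ofReal (C * (s ^ (2 - α) / log s ^ δ)) := by
  set β := 2 - α
  have hβ : 0 < β := by linarith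
  set K := (δ / (β / 2)) ^ δ
  refine ⟨K / log 2 ^ δ / β + 2 ^ δ / β, by positivity, fun s hs => ?_⟩
  set u := √s with hu_def
  have hs₀ : 0 < s := by linarith
  have hu : 1 < u := by rw [show (1 : ℝ) = √1 by simp]; exact sqrt_lt_sqrt zero_le_one hs
  have hlogs : 0 < log s := log_pos hs
  have hlogu : log u = log s / 2 := log_sqrt hs₀.le
  have huβ : u ^ β = s ^ (β / 2) := by
    rw [hu_def, sqrt_eq_rpow, ← rpow_mul hs₀.le, one_div_mul_eq_div]
  have hsβ : s ^ β = s ^ (β / 2) * s ^ (β / 2) := by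
    rw [← rpow_add hs₀, add_halves]
  have piece₁ : u ^ β / β / log 2 ^ δ ≤ K / log 2 ^ δ / β * (s ^ β / log s ^ δ) := by
    have hlog := log_rpow_le_mul_rpow hs.le hδ (half_pos hβ)
    rw [huβ, hsβ]
    have : 0 < s ^ (β / 2) := rpow_pos_of_pos hs₀ _
    have : 0 < log s ^ δ := rpow_pos_of_pos hlogs _
    have : 0 < log 2 ^ δ := rpow_pos_of_pos (log_pos one_lt_two) _
    field_simp
    exact hlog.trans_eq (mul_comm _ _)
  have piece₂ : s ^ β / β / log (u + 1) ^ δ ≤ 2 ^ δ / β * (s ^ β / log s ^ δ) :=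
    calc s ^ β / β / log (u + 1) ^ δ ≤ s ^ β / β / (log s / 2) ^ δ := by
          gcongr
          rw [← hlogu]
          exact log_le_log (by linarith) (by linarith)
      _ = 2 ^ δ / β * (s ^ β / log s ^ δ) := by
          rw [div_rpow hlogs.le zero_le_two]
          field_simp
  calc ∫⁻ t in Icc 1 s, ENNReal.ofReal (t ^ (1 - α) / log (t + 1) ^ δ)
      ≤ ∫⁻ t in Icc 1 u ∪ Icc u s, ENNReal.ofReal (t ^ (1 - α) / log (t + 1) ^ δ) :=
        lintegral_mono_set Icc_subset_Icc_union_Icc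
    _ ≤ _ := lintegral_union_le _ _ _
    _ ≤ ENNReal.ofReal (u ^ β / β / log 2 ^ δ) + ENNReal.ofReal (s ^ β / β / log (u + 1) ^ δ) :=
        add_le_add
          (one_add_one_eq_two (R := ℝ) ▸ lintegral_Icc_rpow_div_log_rpow_le hα one_pos hδ.le)
          (lintegral_Icc_rpow_div_log_rpow_le hα (by linarith) hδ.le)
    _ ≤ _ := by
        rw [← ENNReal.ofReal_add (by positivity) (div_nonneg
          (div_nonneg (rpow_nonneg hs₀.le _) hβ.le) (rpow_nonneg (log_nonneg (by linarith)) _))]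
        exact ENNReal.ofReal_le_ofReal (by linarith)

lemma exists_setLIntegral_le_rpow_div_log {α : ℝ} (hα₁ : 1 < α) (hα₂ : α < 2) :
    ∃ C : ℝ, 0 < C ∧ ∀ q r : ℝ, 1 < q →
      ∫⁻ p in Icc 1 q ×ˢ Icc 1 r, ENNReal.ofReal (1 / (p.1 + p.2 * log (p.1 + p.2)) ^ α) ≤
        ENNReal.ofReal (C * (q ^ (2 - α) / log q)) := by
  obtain ⟨C, hC, hout⟩ := exists_lintegral_Icc_rpow_div_log_rpow_le hα₂ one_pos
  refine ⟨C / (α - 1), div_pos hC (by linarith), fun q r hq => ?_⟩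
  have hk : 0 ≤ (α - 1)⁻¹ := inv_nonneg.2 (by linarith)
  calc ∫⁻ p in Icc 1 q ×ˢ Icc 1 r, ENNReal.ofReal (1 / (p.1 + p.2 * log (p.1 + p.2)) ^ α)
      ≤ ∫⁻ p in Icc 1 q ×ˢ Icc 1 r, ENNReal.ofReal (1 / (p.1 + p.2 * log (p.1 + 1)) ^ α) := by
        refine setLIntegral_mono (by fun_prop) fun p ⟨⟨hx, _⟩, ⟨hy, _⟩⟩ => ?_
        have : 0 < log (p.1 + 1) := log_pos (by linarith)
        gcongr
    _ = ∫⁻ x in Icc 1 q, ∫⁻ y in Icc 1 r, ENNReal.ofReal (1 / (x + y * log (x + 1)) ^ α) :=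
        setLIntegral_prod _ (by fun_prop)
    _ ≤ ∫⁻ x in Icc 1 q, ENNReal.ofReal (α - 1)⁻¹ *
          ENNReal.ofReal (x ^ (1 - α) / log (x + 1) ^ (1 : ℝ)) := by
        refine setLIntegral_mono' measurableSet_Icc fun x ⟨hx, _⟩ => ?_
        refine (lintegral_Icc_one_div_add_mul_rpow_le hα₁ (by linarith) (log_pos (by linarith))
          zero_le_one).trans_eq ?_
        rw [← ENNReal.ofReal_mul hk, rpow_one, mul_comm (α - 1), ← div_div, div_eq_inv_mul]
    _ = ENNReal.ofReal (α - 1)⁻¹ *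
          ∫⁻ x in Icc 1 q, ENNReal.ofReal (x ^ (1 - α) / log (x + 1) ^ (1 : ℝ)) :=
        lintegral_const_mul' _ _ ENNReal.ofReal_ne_top
    _ ≤ ENNReal.ofReal (α - 1)⁻¹ * ENNReal.ofReal (C * (q ^ (2 - α) / log q ^ (1 : ℝ))) := by
        gcongr
        exact hout q hq
    _ = ENNReal.ofReal (C / (α - 1) * (q ^ (2 - α) / log q)) := by
        rw [← ENNReal.ofReal_mul hk, rpow_one, ← mul_assoc, inv_mul_eq_div]

lemma exists_setLIntegral_le_rpow_div_log_rpow {α : ℝ} (hα₁ : 1 < α) (hα₂ : α < 2) :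
    ∃ C : ℝ, 0 < C ∧ ∀ q r : ℝ, 1 < r →
      ∫⁻ p in Icc 1 q ×ˢ Icc 1 r, ENNReal.ofReal (1 / (p.1 + p.2 * log (p.1 + p.2)) ^ α) ≤
        ENNReal.ofReal (C * (r ^ (2 - α) / log r ^ (α - 1))) := by
  obtain ⟨C, hC, hout⟩ := exists_lintegral_Icc_rpow_div_log_rpow_le hα₂ (sub_pos.2 hα₁)
  refine ⟨C / (α - 1), div_pos hC (by linarith), fun q r hr => ?_⟩
  have hk : 0 ≤ (α - 1)⁻¹ := inv_nonneg.2 (by linarith)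
  calc ∫⁻ p in Icc 1 q ×ˢ Icc 1 r, ENNReal.ofReal (1 / (p.1 + p.2 * log (p.1 + p.2)) ^ α)
      ≤ ∫⁻ p in Icc 1 q ×ˢ Icc 1 r,
          ENNReal.ofReal (1 / (p.2 * log (p.2 + 1) + p.1 * 1) ^ α) := by
        refine setLIntegral_mono (by fun_prop) fun p ⟨⟨hx, _⟩, ⟨hy, _⟩⟩ => ?_
        have : 0 < log (p.2 + 1) := log_pos (by linarith)
        have : log (p.2 + 1) ≤ log (p.1 + p.2) := log_le_log (by linarith) (by linarith)
        rw [mul_one, add_comm (p.2 * _)]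
        gcongr
    _ = ∫⁻ y in Icc 1 r, ∫⁻ x in Icc 1 q,
          ENNReal.ofReal (1 / (y * log (y + 1) + x * 1) ^ α) :=
        setLIntegral_prod_symm _ (by fun_prop)
    _ ≤ ∫⁻ y in Icc 1 r, ENNReal.ofReal (α - 1)⁻¹ *
          ENNReal.ofReal (y ^ (1 - α) / log (y + 1) ^ (α - 1)) := by
        refine setLIntegral_mono' measurableSet_Icc fun y ⟨hy, _⟩ => ?_
        have hlog : 0 < log (y + 1) := log_pos (by linarith)
        refine (lintegral_Icc_one_div_add_mul_rpow_le hα₁ (by positivity) one_pos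
          zero_le_one).trans_eq ?_
        rw [← ENNReal.ofReal_mul hk, mul_one, mul_rpow (by linarith) hlog.le,
          ← neg_sub α 1, rpow_neg hlog.le]
        ring_nf
    _ = ENNReal.ofReal (α - 1)⁻¹ *
          ∫⁻ y in Icc 1 r, ENNReal.ofReal (y ^ (1 - α) / log (y + 1) ^ (α - 1)) :=
        lintegral_const_mul' _ _ ENNReal.ofReal_ne_top
    _ ≤ ENNReal.ofReal (α - 1)⁻¹ * ENNReal.ofReal (C * (r ^ (2 - α) / log r ^ (α - 1))) := by
        gcongr
        exact hout r hr
    _ = ENNReal.ofReal (C / (α - 1) * (r ^ (2 - α) / log r ^ (α - 1))) := by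
        rw [← ENNReal.ofReal_mul hk, ← mul_assoc, inv_mul_eq_div]

theorem stmt_14 (α : ℝ) (hα1 : 1 < α) (hα2 : α < 2) :
    ∃ C : ℝ, 0 < C ∧ ∀ q r : ℝ, 3 ≤ q → 3 ≤ r →
      (∫⁻ p in Set.Icc (1 : ℝ) q ×ˢ Set.Icc (1 : ℝ) r,
          ENNReal.ofReal (1 / (p.1 + p.2 * Real.log (p.1 + p.2)) ^ α)) ≤
        ENNReal.ofReal
          (C * min (q ^ (2 - α) / Real.log q)
            (r ^ (2 - α) / (Real.log r) ^ (α - 1))) := by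
  obtain ⟨C₁, hC₁, h₁⟩ := exists_setLIntegral_le_rpow_div_log hα1 hα2
  obtain ⟨C₂, -, h₂⟩ := exists_setLIntegral_le_rpow_div_log_rpow hα1 hα2
  refine ⟨max C₁ C₂, lt_max_of_lt_left hC₁, fun q r hq hr => ?_⟩
  have hq₀ : 0 ≤ q ^ (2 - α) / log q :=
    div_nonneg (rpow_nonneg (by linarith) _) (log_nonneg (by linarith))
  have hr₀ : 0 ≤ r ^ (2 - α) / log r ^ (α - 1) :=
    div_nonneg (rpow_nonneg (by linarith) _) (rpow_nonneg (log_nonneg (by linarith)) _)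
  rw [mul_min_of_nonneg _ _ (hC₁.le.trans (le_max_left _ _)), ENNReal.ofReal_min]
  exact le_min
    ((h₁ q r (by linarith)).trans
      (ENNReal.ofReal_le_ofReal (mul_le_mul_of_nonneg_right (le_max_left _ _) hq₀)))
    ((h₂ q r (by linarith)).trans
      (ENNReal.ofReal_le_ofReal (mul_le_mul_of_nonneg_right (le_max_right _ _) hr₀)))
end
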